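/- Let F : [0,∞) × ℝⁿ → ℝⁿ be continuous with |F(t,y)| ≤ A e^{−t}, and let (X(t,x,v),V(t,x,v)) solve X′ = V, V′ = X − F(t,X) with data (x,v). If x + v ≠ ∫₀^∞ e^{−s}F(s,X(s,x,v))ds, then |X(t,x,v)| → ∞ and |V(t,x,v)| → ∞ as t → ∞. -/

import Mathlib

/-! Put `U = X + V` and `D = X - V`, so that `U' = U - G` and `D' = -D + G` with
`G(s) = F(s, X(s))`. Variation of constants gives
`e^{-t} U(t) = x + v - ∫₀^t e^{-s} G(s) ds`, which tends to the nonzero vector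
`x + v - ∫₀^∞ e^{-s} G(s) ds`, so `|U(t)|` grows like `e^t`; and
`e^t D(t) = x - v + ∫₀^t e^s G(s) ds` with `|e^s G(s)| ≤ A`, so `D` stays bounded.
Hence both `X = (U + D)/2` and `V = (U - D)/2` are unbounded in norm. -/

open MeasureTheory Filter

/-- The Euclidean norm on `Fin n → ℝ`. -/
noncomputable def euclNorm {n : ℕ} (x : Fin n → ℝ) : ℝ := Real.sqrt (∑ i, x i ^ 2)

open Set Real Topology

lemma norm_le_euclNorm {n : ℕ} (y : Fin n → ℝ) : ‖y‖ ≤ euclNorm y := by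
  rw [euclNorm, pi_norm_le_iff_of_nonneg (sqrt_nonneg _)]
  intro i
  rw [Real.norm_eq_abs, ← sqrt_sq_eq_abs]
  exact sqrt_le_sqrt (Finset.single_le_sum (f := fun j => y j ^ 2) (fun j _ => sq_nonneg _)
    (Finset.mem_univ i))

section

variable {E : Type*} [NormedAddCommGroup E]

lemma tendsto_norm_atTop_of_norm_add_of_norm_sub_le {α : Type*} {l : Filter α}
    {a b : α → E} {C : ℝ} (hadd : Tendsto (fun t => ‖a t + b t‖) l atTop)
    (hsub : ∀ᶠ t in l, ‖a t - b t‖ ≤ C) :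
    Tendsto (fun t => ‖a t‖) l atTop := by
  refine tendsto_atTop_mono' l ?_
    (tendsto_atTop_add_const_right l (-C / 2) (hadd.atTop_div_const two_pos))
  filter_upwards [hsub] with t ht
  have h : ‖a t + b t‖ ≤ ‖a t‖ + ‖a t‖ + ‖a t - b t‖ := by
    calc ‖a t + b t‖ = ‖a t + a t - (a t - b t)‖ := by congr 1; abel
      _ ≤ ‖a t‖ + ‖a t‖ + ‖a t - b t‖ := by
        grw [norm_sub_le, norm_add_le]
  linarith

variable [NormedSpace ℝ E]

lemma tendsto_norm_atTop_of_tendsto_exp_neg_smul {W : ℝ → E} {L : E} (hL : L ≠ 0)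
    (hW : Tendsto (fun t => exp (-t) • W t) atTop (𝓝 L)) :
    Tendsto (fun t => ‖W t‖) atTop atTop := by
  have h := tendsto_exp_atTop.atTop_mul_pos (norm_pos_iff.mpr hL) hW.norm
  refine h.congr fun t => ?_
  rw [norm_smul, norm_of_nonneg (exp_pos _).le, ← mul_assoc, ← exp_add, add_neg_cancel,
    exp_zero, one_mul]

variable {G : ℝ → E} {A : ℝ}

lemma integrableOn_exp_neg_smul_Ioi (hGc : ContinuousOn G (Ici 0))
    (hG : ∀ s, 0 ≤ s → ‖G s‖ ≤ A * exp (-s)) :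
    IntegrableOn (fun s => exp (-s) • G s) (Ioi 0) := by
  refine Integrable.mono' ((exp_neg_integrableOn_Ioi 0 two_pos).const_mul A) ?_ ?_
  · exact ((continuous_exp.comp continuous_neg).continuousOn.smul hGc).mono
      Ioi_subset_Ici_self |>.aestronglyMeasurable measurableSet_Ioi
  · filter_upwards [ae_restrict_mem measurableSet_Ioi] with s hs
    rw [norm_smul, norm_of_nonneg (exp_pos _).le]
    calc exp (-s) * ‖G s‖ ≤ exp (-s) * (A * exp (-s)) := by gcongr; exact hG s hs.le
      _ = A * exp (-2 * s) := by rw [show -2 * s = -s + -s by ring, exp_add]; ring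

lemma norm_intervalIntegral_exp_smul_le (hG : ∀ s, 0 ≤ s → ‖G s‖ ≤ A * exp (-s))
    {t : ℝ} (ht : 0 ≤ t) : ‖∫ s in 0..t, exp s • G s‖ ≤ A * t := by
  have h := intervalIntegral.norm_integral_le_of_norm_le_const (C := A)
    (f := fun s => exp s • G s) (a := 0) (b := t) fun s hs => by
      rw [uIoc_of_le ht] at hs
      rw [norm_smul, norm_of_nonneg (exp_pos _).le]
      calc exp s * ‖G s‖ ≤ exp s * (A * exp (-s)) := by gcongr; exact hG s hs.1.le
        _ = A := by rw [mul_left_comm, ← exp_add, add_neg_cancel, exp_zero, mul_one]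
  rwa [sub_zero, abs_of_nonneg ht] at h

variable [CompleteSpace E]

lemma exp_smul_eq_add_integral_of_hasDerivAt {c : ℝ} {U H : ℝ → E}
    (hU : ∀ t, 0 ≤ t → HasDerivAt U (c • U t + H t) t) (hH : ContinuousOn H (Ici 0))
    {t : ℝ} (ht : 0 ≤ t) :
    exp (-(c * t)) • U t = U 0 + ∫ s in 0..t, exp (-(c * s)) • H s := by
  have hIcc : uIcc 0 t = Icc 0 t := uIcc_of_le ht
  have hderiv : ∀ s ∈ uIcc 0 t,
      HasDerivAt (fun s => exp (-(c * s)) • U s) (exp (-(c * s)) • H s) s := by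
    intro s hs
    rw [hIcc] at hs
    have hexp : HasDerivAt (fun s => exp (-(c * s))) (-c * exp (-(c * s))) s := by
      simpa [mul_comm] using ((hasDerivAt_id s).const_mul c).neg.exp
    refine (hexp.smul (hU s hs.1)).congr_deriv ?_
    module
  have hint : IntervalIntegrable (fun s => exp (-(c * s)) • H s) volume 0 t := by
    refine ContinuousOn.intervalIntegrable ?_
    rw [hIcc]
    exact (by fun_prop : Continuous fun s => exp (-(c * s))).continuousOn.smul
      (hH.mono Icc_subset_Ici_self)
  rw [intervalIntegral.integral_eq_sub_of_hasDerivAt hderiv hint]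
  simp

lemma tendsto_exp_neg_smul_of_hasDerivAt {U : ℝ → E}
    (hU : ∀ t, 0 ≤ t → HasDerivAt U (U t - G t) t) (hGc : ContinuousOn G (Ici 0))
    (hG : ∀ s, 0 ≤ s → ‖G s‖ ≤ A * exp (-s)) :
    Tendsto (fun t => exp (-t) • U t) atTop
      (𝓝 (U 0 - ∫ s in Ioi 0, exp (-s) • G s)) := by
  have hU' : ∀ t, 0 ≤ t → HasDerivAt U ((1 : ℝ) • U t + -G t) t := fun t ht =>
    (hU t ht).congr_deriv (by rw [one_smul, sub_eq_add_neg])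
  have hrepr : ∀ t, 0 ≤ t →
      U 0 - ∫ s in 0..t, exp (-s) • G s = exp (-t) • U t := fun t ht => by
    simpa [intervalIntegral.integral_neg, sub_eq_add_neg] using
      (exp_smul_eq_add_integral_of_hasDerivAt hU' hGc.neg ht).symm
  refine Tendsto.congr' ?_ (tendsto_const_nhds.sub
    (intervalIntegral_tendsto_integral_Ioi 0 (integrableOn_exp_neg_smul_Ioi hGc hG) tendsto_id))
  filter_upwards [eventually_ge_atTop 0] with t ht
  exact hrepr t ht

lemma norm_le_of_hasDerivAt_neg_add {D : ℝ → E}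
    (hD : ∀ t, 0 ≤ t → HasDerivAt D (-D t + G t) t) (hGc : ContinuousOn G (Ici 0))
    (hG : ∀ s, 0 ≤ s → ‖G s‖ ≤ A * exp (-s)) {t : ℝ} (ht : 0 ≤ t) :
    ‖D t‖ ≤ ‖D 0‖ + A := by
  have hD' : ∀ t, 0 ≤ t → HasDerivAt D ((-1 : ℝ) • D t + G t) t := fun t ht =>
    (hD t ht).congr_deriv (by rw [neg_one_smul])
  have hrepr : exp t • D t = D 0 + ∫ s in 0..t, exp s • G s := by
    simpa using exp_smul_eq_add_integral_of_hasDerivAt hD' hGc ht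
  have hA : 0 ≤ A := by simpa using (norm_nonneg _).trans (hG 0 le_rfl)
  have hgrowth : exp t * ‖D t‖ ≤ ‖D 0‖ + A * t := by
    calc exp t * ‖D t‖ = ‖D 0 + ∫ s in 0..t, exp s • G s‖ := by
          rw [← hrepr, norm_smul, norm_of_nonneg (exp_pos _).le]
      _ ≤ ‖D 0‖ + A * t := by
          grw [norm_add_le, norm_intervalIntegral_exp_smul_le hG ht]
  have h1 : 1 ≤ exp t := one_le_exp ht
  have ht1 : t ≤ exp t := by linarith [add_one_le_exp t]
  nlinarith [norm_nonneg (D t), norm_nonneg (D 0)]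

end

theorem stmt15_general {n : ℕ} (F : ℝ → (Fin n → ℝ) → (Fin n → ℝ))
    (hF : Continuous (fun p : ℝ × (Fin n → ℝ) => F p.1 p.2))
    (A : ℝ)
    (hFbound : ∀ t : ℝ, 0 ≤ t → ∀ y : Fin n → ℝ, euclNorm (F t y) ≤ A * Real.exp (-t))
    (X V : ℝ → Fin n → ℝ) (x v : Fin n → ℝ)
    (hX0 : X 0 = x) (hV0 : V 0 = v)
    (hX : ∀ t : ℝ, 0 ≤ t → HasDerivAt X (V t) t)
    (hV : ∀ t : ℝ, 0 ≤ t → HasDerivAt V (X t - F t (X t)) t)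
    (hxv : x + v ≠ ∫ s in Set.Ioi (0:ℝ), Real.exp (-s) • F s (X s)) :
    Tendsto (fun t => euclNorm (X t)) atTop atTop ∧
    Tendsto (fun t => euclNorm (V t)) atTop atTop := by
  set G : ℝ → Fin n → ℝ := fun s => F s (X s)
  have hGc : ContinuousOn G (Ici 0) := hF.comp_continuousOn
    (continuousOn_id.prodMk fun s hs => (hX s hs).continuousAt.continuousWithinAt)
  have hG : ∀ s, 0 ≤ s → ‖G s‖ ≤ A * exp (-s) := fun s hs =>
    (norm_le_euclNorm _).trans (hFbound s hs _)
  have hU : ∀ t, 0 ≤ t → HasDerivAt (X + V) ((X + V) t - G t) t := fun t ht =>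
    ((hX t ht).add (hV t ht)).congr_deriv (by simp only [Pi.add_apply, G]; abel)
  have hD : ∀ t, 0 ≤ t → HasDerivAt (X - V) (-(X - V) t + G t) t := fun t ht =>
    ((hX t ht).sub (hV t ht)).congr_deriv (by simp only [Pi.sub_apply, G]; abel)
  have hsum : Tendsto (fun t => ‖X t + V t‖) atTop atTop :=
    tendsto_norm_atTop_of_tendsto_exp_neg_smul (by simpa [hX0, hV0, sub_eq_zero] using hxv)
      (tendsto_exp_neg_smul_of_hasDerivAt hU hGc hG)
  have hdiff : ∀ᶠ t in atTop, ‖X t - V t‖ ≤ ‖x - v‖ + A := by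
    filter_upwards [eventually_ge_atTop 0] with t ht
    simpa [hX0, hV0] using norm_le_of_hasDerivAt_neg_add hD hGc hG ht
  have hsum' : Tendsto (fun t => ‖V t + X t‖) atTop atTop := by
    simpa only [add_comm] using hsum
  have hdiff' : ∀ᶠ t in atTop, ‖V t - X t‖ ≤ ‖x - v‖ + A := by
    simpa only [norm_sub_rev] using hdiff
  exact ⟨tendsto_atTop_mono (fun t => norm_le_euclNorm _)
      (tendsto_norm_atTop_of_norm_add_of_norm_sub_le hsum hdiff),
    tendsto_atTop_mono (fun t => norm_le_euclNorm _)
      (tendsto_norm_atTop_of_norm_add_of_norm_sub_le hsum' hdiff')⟩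

/-- if `x + v ≠ ∫₀^∞ e^{−s} F(s,X(s)) ds`, then `|X(t)| → ∞` and
`|V(t)| → ∞` as `t → ∞`. -/
theorem stmt15 {n : ℕ} (F : ℝ → (Fin n → ℝ) → (Fin n → ℝ))
    (hF : Continuous (fun p : ℝ × (Fin n → ℝ) => F p.1 p.2))
    (A : ℝ) (hA : 0 < A)
    (hFbound : ∀ t : ℝ, 0 ≤ t → ∀ y : Fin n → ℝ, euclNorm (F t y) ≤ A * Real.exp (-t))
    (X V : ℝ → Fin n → ℝ) (x v : Fin n → ℝ)
    (hX0 : X 0 = x) (hV0 : V 0 = v)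
    (hX : ∀ t : ℝ, 0 ≤ t → HasDerivAt X (V t) t)
    (hV : ∀ t : ℝ, 0 ≤ t → HasDerivAt V (X t - F t (X t)) t)
    (hxv : x + v ≠ ∫ s in Set.Ioi (0:ℝ), Real.exp (-s) • F s (X s)) :
    Tendsto (fun t => euclNorm (X t)) atTop atTop ∧
    Tendsto (fun t => euclNorm (V t)) atTop atTop :=
  stmt15_general F hF A hFbound X V x v hX0 hV0 hX hV hxv
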